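/- Let K > 0 and let κ : ℝ → ℝ be continuous with |κ(s)| ≤ K for all s. Let η ∈ (0,1/24), ρ = 1/8 + η, and set ã(σ,τ) = 1 − h^{1/2}·τ·κ(h^{1/8}σ). There exist constants C > 0 and h₀ ∈ (0,1), depending only on K and η, such that for all h ∈ (0,h₀) and every square-integrable function v on (−h^{−η}, h^{−η}) × (0, h^{−ρ}): ‖R⁻_{0,h}v − R₀⁻v‖ ≤ C·h^{1/2−ρ}·‖v‖ and ‖R̃⁻_{0,h}v − R₀⁻v‖ ≤ C·h^{1/2−ρ}·‖v‖, where (R₀⁻v)(σ) = ∫₀^{h^{−ρ}} u_{0,h}(τ)v(σ,τ) dτ, (R⁻_{0,h}v)(σ) = ∫₀^{h^{−ρ}} u_{0,h}(τ)v(σ,τ)·ã(σ,τ) dτ, (R̃⁻_{0,h}v)(σ) = ∫₀^{h^{−ρ}} u_{0,h}(τ)v(σ,τ)·ã(σ,τ)^{−1} dτ, and the norms are the L² norms on (−h^{−η}, h^{−η}) and on (−h^{−η}, h^{−η}) × (0, h^{−ρ}) respectively. -/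

import Mathlib

open MeasureTheory Real Set

noncomputable section

/-- The secular function whose zeros `w > 0` correspond, via `λ = -w²`, to the negative
eigenvalues of the 1D Laplacian on `(0, h^{-ρ})` with Robin condition `u'(0) = -u(0)`
and Dirichlet condition `u(h^{-ρ}) = 0`. -/
def secular (ρ h v : ℝ) : ℝ := v - 1 + (v + 1) * Real.exp (-2 * v * h ^ (-ρ))

/-!
Write `a = 1 - h^{1/2} τ κ(h^{1/8} σ)`. For `τ ∈ (0, h^{-ρ})` one has `|a - 1| ≤ K h^{1/2-ρ}`,
which is at most `1/2` once `h` is small because `1/2 - ρ > 0`; then also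
`|a⁻¹ - 1| ≤ 2 K h^{1/2-ρ}`. For each `σ` the difference of the two projections is
`∫ u (c - 1) v(σ, ·)` with `c = a` or `c = a⁻¹`, so Cauchy–Schwarz and `‖u‖₂ = 1` bound its
square by `(2 K h^{1/2-ρ})² ‖v(σ, ·)‖₂²`; integrating in `σ` (Fubini) gives `C = 2K`.
-/

section SliceEstimate

variable {α : Type*} [MeasurableSpace α] {μ : Measure α}

theorem sq_integral_mul_le_integral_sq_mul_integral_sq {f g : α → ℝ} (hf : MemLp f 2 μ)
    (hg : MemLp g 2 μ) :
    (∫ x, f x * g x ∂μ) ^ 2 ≤ (∫ x, f x ^ 2 ∂μ) * ∫ x, g x ^ 2 ∂μ := by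
  have inner_toLp (f g : α → ℝ) (hf : MemLp f 2 μ) (hg : MemLp g 2 μ) :
      inner ℝ (hf.toLp f) (hg.toLp g) = ∫ x, f x * g x ∂μ := by
    rw [L2.inner_def]
    refine integral_congr_ae ?_
    filter_upwards [hf.coeFn_toLp, hg.coeFn_toLp] with x hfx hgx
    simp [hfx, hgx, mul_comm]
  have := real_inner_mul_inner_self_le (hf.toLp f) (hg.toLp g)
  simp only [inner_toLp _ _ hf hg, inner_toLp _ _ hf hf, inner_toLp _ _ hg hg] at this
  simpa [sq] using this

theorem aestronglyMeasurable_of_integrable_mul {a g : α → ℝ} (ha : AEStronglyMeasurable a μ)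
    (ha0 : ∀ᵐ x ∂μ, a x ≠ 0) (hag : Integrable (fun x => a x * g x) μ) :
    AEStronglyMeasurable g μ := by
  refine (hag.1.mul ha.aemeasurable.inv.aestronglyMeasurable).congr ?_
  filter_upwards [ha0] with x hx
  simp only [Pi.mul_apply, Pi.inv_apply]
  field_simp

variable {u g c : α → ℝ} {ε : ℝ}

theorem sq_integral_mul_sub_integral_le (hu : AEStronglyMeasurable u μ)
    (hu2 : ∫ x, u x ^ 2 ∂μ = 1) (hc : AEStronglyMeasurable c μ)
    (hcε : ∀ᵐ x ∂μ, |c x - 1| ≤ ε) (hg : MemLp g 2 μ) :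
    (∫ x, u x * g x * c x ∂μ - ∫ x, u x * g x ∂μ) ^ 2 ≤ ε ^ 2 * ∫ x, g x ^ 2 ∂μ := by
  have hu2int : Integrable (fun x => u x ^ 2) μ := .of_integral_ne_zero (by simp [hu2])
  have huL2 : MemLp u 2 μ := (memLp_two_iff_integrable_sq hu).2 hu2int
  have hFL2 : MemLp (fun x => u x * (c x - 1)) 2 μ := by
    refine huL2.of_le_mul (c := ε) (hu.mul (hc.sub aestronglyMeasurable_const)) ?_
    filter_upwards [hcε] with x hx
    simpa [abs_mul, mul_comm] using mul_le_mul_of_nonneg_left hx (abs_nonneg (u x))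
  have hug : Integrable (fun x => u x * g x) μ := huL2.integrable_mul hg
  have hFg : Integrable (fun x => u x * (c x - 1) * g x) μ := hFL2.integrable_mul hg
  have hdiff : ∫ x, u x * g x * c x ∂μ - ∫ x, u x * g x ∂μ
      = ∫ x, u x * (c x - 1) * g x ∂μ := by
    have hugc : Integrable (fun x => u x * g x * c x) μ :=
      (hFg.add hug).congr (.of_forall fun x => by simp only [Pi.add_apply]; ring)
    rw [← integral_sub hugc hug]
    exact integral_congr_ae (.of_forall fun x => by ring)
  have hF2 : ∫ x, (u x * (c x - 1)) ^ 2 ∂μ ≤ ε ^ 2 := by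
    calc ∫ x, (u x * (c x - 1)) ^ 2 ∂μ ≤ ∫ x, ε ^ 2 * u x ^ 2 ∂μ := by
          refine integral_mono_of_nonneg (.of_forall fun x => sq_nonneg _)
            (hu2int.const_mul _) ?_
          filter_upwards [hcε] with x hx
          rw [mul_pow, mul_comm]
          exact mul_le_mul_of_nonneg_right (sq_le_sq' (abs_le.1 hx).1 (abs_le.1 hx).2)
            (sq_nonneg _)
      _ = ε ^ 2 := by rw [integral_const_mul, hu2, mul_one]
  rw [hdiff]
  exact (sq_integral_mul_le_integral_sq_mul_integral_sq hFL2 hg).trans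
    (mul_le_mul_of_nonneg_right hF2 (integral_nonneg fun x => sq_nonneg _))

/-- Without measurability of `g` both integrals may be the junk value `0`; that happens
simultaneously for both of them as soon as `u` and `c` vanish only on a null set. -/
theorem sq_integral_mul_sub_integral_le_of_ae_ne_zero (hu : AEStronglyMeasurable u μ)
    (hu2 : ∫ x, u x ^ 2 ∂μ = 1) (hc : AEStronglyMeasurable c μ)
    (hcε : ∀ᵐ x ∂μ, |c x - 1| ≤ ε) (hg : Integrable (fun x => g x ^ 2) μ)
    (hu0 : ∀ᵐ x ∂μ, u x ≠ 0) (hc0 : ∀ᵐ x ∂μ, c x ≠ 0) :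
    (∫ x, u x * g x * c x ∂μ - ∫ x, u x * g x ∂μ) ^ 2 ≤ ε ^ 2 * ∫ x, g x ^ 2 ∂μ := by
  by_cases hgm : AEStronglyMeasurable g μ
  · exact sq_integral_mul_sub_integral_le hu hu2 hc hcε ((memLp_two_iff_integrable_sq hgm).2 hg)
  have hugc : ¬Integrable (fun x => u x * g x * c x) μ := fun h =>
    hgm <| aestronglyMeasurable_of_integrable_mul (hu.mul hc)
      (by filter_upwards [hu0, hc0] with x hux hcx using mul_ne_zero hux hcx)
      (h.congr (.of_forall fun x => by simp only [Pi.mul_apply]; ring))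
  have hug : ¬Integrable (fun x => u x * g x) μ := fun h =>
    hgm <| aestronglyMeasurable_of_integrable_mul hu hu0 h
  rw [integral_undef hugc, integral_undef hug]
  simpa using mul_nonneg (sq_nonneg ε) (integral_nonneg fun x => sq_nonneg (g x))

end SliceEstimate

theorem sqrt_integral_sq_le_of_ae_sq_le {β : Type*} [MeasurableSpace β] {ν : Measure β}
    {F G : β → ℝ} {δ : ℝ} (hδ : 0 ≤ δ) (hG : Integrable G ν)
    (h : ∀ᵐ σ ∂ν, F σ ^ 2 ≤ δ ^ 2 * G σ) :
    √(∫ σ, F σ ^ 2 ∂ν) ≤ δ * √(∫ σ, G σ ∂ν) := by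
  calc √(∫ σ, F σ ^ 2 ∂ν) ≤ √(∫ σ, δ ^ 2 * G σ ∂ν) :=
        sqrt_le_sqrt (integral_mono_of_nonneg (.of_forall fun σ => sq_nonneg _)
          (hG.const_mul _) h)
    _ = δ * √(∫ σ, G σ ∂ν) := by rw [integral_const_mul, sqrt_mul (sq_nonneg δ), sqrt_sq hδ]

theorem sqrt_integral_sq_intervalIntegral_mul_sub_le {S : Set ℝ} {T δ : ℝ} {u : ℝ → ℝ}
    {v c : ℝ → ℝ → ℝ} (hT : 0 ≤ T) (hu : Continuous u) (hu0 : ∀ τ ∈ Ioo 0 T, u τ ≠ 0)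
    (hu2 : ∫ τ in (0 : ℝ)..T, u τ ^ 2 = 1) (hc : ∀ σ, Measurable (c σ))
    (hc0 : ∀ σ, ∀ τ ∈ Ioo 0 T, c σ τ ≠ 0) (hcδ : ∀ σ, ∀ τ ∈ Ioo 0 T, |c σ τ - 1| ≤ δ)
    (hδ : 0 ≤ δ) (hv : IntegrableOn (fun p : ℝ × ℝ => v p.1 p.2 ^ 2) (S ×ˢ Ioo 0 T)) :
    √(∫ σ in S, ((∫ τ in (0 : ℝ)..T, u τ * v σ τ * c σ τ) - ∫ τ in (0 : ℝ)..T, u τ * v σ τ) ^ 2)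
      ≤ δ * √(∫ σ in S, ∫ τ in Ioo 0 T, v σ τ ^ 2) := by
  simp only [intervalIntegral.integral_of_le hT, integral_Ioc_eq_integral_Ioo] at hu2 ⊢
  have hmem : ∀ᵐ τ ∂volume.restrict (Ioo 0 T), τ ∈ Ioo 0 T := ae_restrict_mem measurableSet_Ioo
  have hv' : Integrable (fun p : ℝ × ℝ => v p.1 p.2 ^ 2)
      ((volume.restrict S).prod (volume.restrict (Ioo 0 T))) := by
    rwa [Measure.prod_restrict, ← Measure.volume_eq_prod]
  refine sqrt_integral_sq_le_of_ae_sq_le hδ hv'.integral_prod_left ?_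
  filter_upwards [hv'.prod_right_ae] with σ hσ
  exact sq_integral_mul_sub_integral_le_of_ae_ne_zero hu.aestronglyMeasurable hu2
    (hc σ).aestronglyMeasurable (hmem.mono (hcδ σ)) hσ (hmem.mono hu0) (hmem.mono (hc0 σ))

theorem abs_inv_sub_one_le_two_mul {x ε : ℝ} (hx : |x - 1| ≤ ε) (hε : ε ≤ 1 / 2) :
    |x⁻¹ - 1| ≤ 2 * ε := by
  have hx2 : 1 / 2 ≤ x := by linarith [(abs_le.1 hx).1]
  have hx0 : x ≠ 0 := by positivity
  rw [show x⁻¹ - 1 = -(x - 1) / x by field_simp; ring, abs_div, abs_neg,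
    abs_of_pos (by positivity : 0 < x), div_le_iff₀ (by positivity)]
  nlinarith [abs_nonneg (x - 1)]

theorem exists_forall_mul_rpow_le_half {K e : ℝ} (hK : 0 < K) (he : 0 < e) :
    ∃ h₀ ∈ Ioo (0 : ℝ) 1, ∀ h ∈ Ioo 0 h₀, K * h ^ e ≤ 1 / 2 := by
  refine ⟨min (1 / 2) ((2 * K)⁻¹ ^ e⁻¹), ⟨by positivity, by
    exact (min_le_left _ _).trans_lt (by norm_num)⟩, fun h hh => ?_⟩
  have hle : h ^ e ≤ (2 * K)⁻¹ := by
    calc h ^ e ≤ ((2 * K)⁻¹ ^ e⁻¹) ^ e :=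
          rpow_le_rpow hh.1.le (hh.2.le.trans (min_le_right _ _)) he.le
      _ = (2 * K)⁻¹ := by rw [← rpow_mul (by positivity), inv_mul_cancel₀ he.ne', rpow_one]
  calc K * h ^ e ≤ K * (2 * K)⁻¹ := mul_le_mul_of_nonneg_left hle hK.le
    _ = 1 / 2 := by field_simp

theorem abs_one_sub_mul_mul_sub_one_le {a τ k K T : ℝ} (ha : 0 ≤ a) (hτ : 0 ≤ τ) (hτT : τ ≤ T)
    (hk : |k| ≤ K) : |(1 - a * τ * k) - 1| ≤ K * (a * T) := by
  rw [sub_sub_cancel_left, abs_neg, abs_mul, abs_mul, abs_of_nonneg ha, abs_of_nonneg hτ]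
  calc a * τ * |k| ≤ a * T * K :=
        mul_le_mul (mul_le_mul_of_nonneg_left hτT ha) hk (abs_nonneg k)
          (mul_nonneg ha (hτ.trans hτT))
    _ = K * (a * T) := by ring

theorem exp_sub_exp_mul_exp_pos {w T τ : ℝ} (hw : 0 < w) (hτ : τ < T) :
    0 < exp (-w * τ) - exp (-2 * w * T) * exp (w * τ) := by
  rw [sub_pos, ← exp_add, exp_lt_exp]
  nlinarith

theorem projection_operators_comparison (K : ℝ) (hK : 0 < K)
    (η : ℝ) (hη : η ∈ Set.Ioo (0 : ℝ) (1 / 24)) (ρ : ℝ) (hρ : ρ = 1 / 8 + η) :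
    ∃ C > (0 : ℝ), ∃ h₀ ∈ Set.Ioo (0 : ℝ) 1,
      ∀ κ : ℝ → ℝ, Continuous κ → (∀ s, |κ s| ≤ K) →
      ∀ h ∈ Set.Ioo (0 : ℝ) h₀,
      ∀ w : ℝ, 0 < w → secular ρ h w = 0 →
      ∀ A : ℝ, 0 < A →
      (∫ τ in (0 : ℝ)..(h ^ (-ρ)),
        (A * (Real.exp (-w * τ) - Real.exp (-2 * w * h ^ (-ρ)) * Real.exp (w * τ))) ^ 2) = 1 →
      ∀ v : ℝ → ℝ → ℝ,
        IntegrableOn (fun p : ℝ × ℝ => (v p.1 p.2) ^ 2)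
          ((Set.Ioo (-(h ^ (-η))) (h ^ (-η))) ×ˢ (Set.Ioo 0 (h ^ (-ρ)))) →
        (Real.sqrt (∫ σ in Set.Ioo (-(h ^ (-η))) (h ^ (-η)),
            ((∫ τ in (0 : ℝ)..(h ^ (-ρ)),
                (A * (Real.exp (-w * τ) - Real.exp (-2 * w * h ^ (-ρ)) * Real.exp (w * τ))) *
                  v σ τ * (1 - h ^ ((1 : ℝ) / 2) * τ * κ (h ^ ((1 : ℝ) / 8) * σ)))
              - ∫ τ in (0 : ℝ)..(h ^ (-ρ)),
                (A * (Real.exp (-w * τ) - Real.exp (-2 * w * h ^ (-ρ)) * Real.exp (w * τ))) *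
                  v σ τ) ^ 2) ≤
          C * h ^ ((1 : ℝ) / 2 - ρ) *
            Real.sqrt (∫ σ in Set.Ioo (-(h ^ (-η))) (h ^ (-η)),
              ∫ τ in Set.Ioo (0 : ℝ) (h ^ (-ρ)), (v σ τ) ^ 2)) ∧
        (Real.sqrt (∫ σ in Set.Ioo (-(h ^ (-η))) (h ^ (-η)),
            ((∫ τ in (0 : ℝ)..(h ^ (-ρ)),
                (A * (Real.exp (-w * τ) - Real.exp (-2 * w * h ^ (-ρ)) * Real.exp (w * τ))) *
                  v σ τ * (1 - h ^ ((1 : ℝ) / 2) * τ * κ (h ^ ((1 : ℝ) / 8) * σ))⁻¹)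
              - ∫ τ in (0 : ℝ)..(h ^ (-ρ)),
                (A * (Real.exp (-w * τ) - Real.exp (-2 * w * h ^ (-ρ)) * Real.exp (w * τ))) *
                  v σ τ) ^ 2) ≤
          C * h ^ ((1 : ℝ) / 2 - ρ) *
            Real.sqrt (∫ σ in Set.Ioo (-(h ^ (-η))) (h ^ (-η)),
              ∫ τ in Set.Ioo (0 : ℝ) (h ^ (-ρ)), (v σ τ) ^ 2)) := by
  obtain ⟨h₀, hh₀, hsmall⟩ :=
    exists_forall_mul_rpow_le_half hK (show 0 < 1 / 2 - ρ by linarith [hη.2])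
  refine ⟨2 * K, by positivity, h₀, hh₀, fun κ _ hκ h hh w hw _ A hA hu2 v hv => ?_⟩
  have hT : 0 < h ^ (-ρ) := rpow_pos_of_pos hh.1 _
  have hε : 0 ≤ K * h ^ (1 / 2 - ρ) := mul_nonneg hK.le (rpow_nonneg hh.1.le _)
  have hfactor : ∀ σ, ∀ τ ∈ Ioo 0 (h ^ (-ρ)),
      |(1 - h ^ ((1 : ℝ) / 2) * τ * κ (h ^ ((1 : ℝ) / 8) * σ)) - 1| ≤ K * h ^ (1 / 2 - ρ) := by
    intro σ τ hτ
    rw [sub_eq_add_neg (1 / 2 : ℝ), rpow_add hh.1]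
    exact abs_one_sub_mul_mul_sub_one_le (rpow_nonneg hh.1.le _) hτ.1.le hτ.2.le (hκ _)
  have hfactor_ne : ∀ σ, ∀ τ ∈ Ioo 0 (h ^ (-ρ)),
      1 - h ^ ((1 : ℝ) / 2) * τ * κ (h ^ ((1 : ℝ) / 8) * σ) ≠ 0 := fun σ τ hτ =>
    ne_of_gt (by linarith [(abs_le.1 (hfactor σ τ hτ)).1, hsmall h hh])
  have hu0 : ∀ τ ∈ Ioo 0 (h ^ (-ρ)),
      A * (exp (-w * τ) - exp (-2 * w * h ^ (-ρ)) * exp (w * τ)) ≠ 0 := fun τ hτ =>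
    (mul_pos hA (exp_sub_exp_mul_exp_pos hw hτ.2)).ne'
  rw [mul_assoc 2]
  constructor
  · exact sqrt_integral_sq_intervalIntegral_mul_sub_le hT.le (by fun_prop) hu0 hu2
      (c := fun σ τ => 1 - h ^ ((1 : ℝ) / 2) * τ * κ (h ^ ((1 : ℝ) / 8) * σ)) (fun σ => by fun_prop)
      hfactor_ne (fun σ τ hτ => (hfactor σ τ hτ).trans (by linarith)) (by linarith) hv
  · exact sqrt_integral_sq_intervalIntegral_mul_sub_le hT.le (by fun_prop) hu0 hu2
      (c := fun σ τ => (1 - h ^ ((1 : ℝ) / 2) * τ * κ (h ^ ((1 : ℝ) / 8) * σ))⁻¹)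
      (fun σ => by fun_prop) (fun σ τ hτ => inv_ne_zero (hfactor_ne σ τ hτ))
      (fun σ τ hτ => abs_inv_sub_one_le_two_mul (hfactor σ τ hτ) (hsmall h hh)) (by linarith) hv
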